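/- arXiv:1303.6013 — 2 statements merged into one kernel-verified Lean document; each statement's English description precedes it below -/
import Mathlib

section
/- For all u, v in a Coxeter group W, the inversion set of v is contained in the inversion set of the Hecke product u · v: I(v) ⊆ I(u · v). -/
noncomputable section

namespace CoxeterSystem

variable {B W : Type*} [Group W] {M : CoxeterMatrix B} (cs : CoxeterSystem M W)

/-- one step of the Hecke (Demazure) product: multiply by a simple reflection -/
def heckeStep (u : W) (i : B) : W :=
  if cs.length u < cs.length (u * cs.simple i) then u * cs.simple i else u

/-- the Hecke product of `u` with the product of a word `l` -/
def heckeWord (u : W) (l : List B) : W := l.foldl cs.heckeStep u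

/-- the Hecke (Demazure) product on `W`, computed via a chosen reduced word for the
second argument -/
def heckeMul (u v : W) : W := cs.heckeWord u (cs.exists_reduced_word' v).choose

/-- the Bruhat order on `W`, via the subword property -/
def bruhatLE (u w : W) : Prop :=
  ∃ l l' : List B, cs.IsReduced l ∧ cs.wordProd l = w ∧
    l'.Sublist l ∧ cs.wordProd l' = u

/-- the (right) inversion set of `w`, as a set of reflections -/
def invSet (w : W) : Set W := {t | cs.IsRightInversion w t}

end CoxeterSystem

end

/-! The Hecke product `u · v` factors as `x * v` with `ℓ (x * v) = ℓ x + ℓ v`: induct along a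
reduced word for `v`; when a letter `s` is absorbed, `s` is a right inversion of `x * v` but not
of `v`, so `v s v⁻¹` is a right inversion of `x` and `x` may be replaced by `x * v s v⁻¹`.
Given the factorization, a right inversion `t` of `v` is one of `x * v`, because
`ℓ (x * v * t) ≤ ℓ x + ℓ (v * t) < ℓ (x * v)`.

The exchange step comes from Tits' reflection cocycle: `W` acts on `W × ZMod 2` by
`s_i • (t, e) = (s_i t s_i, e + [t = s_i])`, and the second coordinate of `w • (t, 0)` is `1`
exactly when `t` is a right inversion of `w`. -/

theorem ZMod.eq_zero_of_ne_one_two {a : ZMod 2} (h : a ≠ 1) : a = 0 := by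
  revert a
  decide

namespace CoxeterSystem

variable {B W : Type*} [Group W] {M : CoxeterMatrix B} (cs : CoxeterSystem M W)

theorem prod_map_alternatingWord_two_mul {G : Type*} [Monoid G] (f : B → G) (i j : B) (m : ℕ) :
    ((alternatingWord i j (2 * m)).map f).prod = (f i * f j) ^ m := by
  induction m with
  | zero => simp [alternatingWord]
  | succ m ih =>
    rw [show 2 * (m + 1) = 2 * m + 1 + 1 by ring, alternatingWord_succ', alternatingWord_succ']
    simp [ih, pow_succ', mul_assoc]

theorem leftInvSeq_alternatingWord_two_mul (i j : B) (m : ℕ) :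
    cs.leftInvSeq (alternatingWord i j (2 * m)) =
      (List.range (2 * m)).map fun k ↦ cs.simple i * (cs.simple j * cs.simple i) ^ k := by
  refine List.ext_getElem (by simp) fun k hk _ ↦ ?_
  rw [cs.getElem_leftInvSeq_alternatingWord i j m k (by simpa using hk),
    prod_alternatingWord_eq_mul_pow]
  simp [Nat.mul_add_div]

section ReflectionCocycle

variable [DecidableEq W]

def reflPerm (i : B) : Equiv.Perm (W × ZMod 2) :=
  Function.Involutive.toPerm
    (fun x ↦ (cs.simple i * x.1 * cs.simple i, x.2 + if x.1 = cs.simple i then 1 else 0))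
    (by
      rintro ⟨t, e⟩
      have h2 : (1 : ZMod 2) + 1 = 0 := rfl
      by_cases ht : t = cs.simple i <;> simp [ht, mul_assoc, add_assoc, h2, mul_eq_one_iff_eq_inv])

theorem reflPerm_apply (i : B) (t : W) (e : ZMod 2) :
    cs.reflPerm i (t, e) =
      (cs.simple i * t * cs.simple i, e + if t = cs.simple i then 1 else 0) :=
  rfl

theorem prod_map_reflPerm_apply (ω : List B) (t : W) (e : ZMod 2) :
    (ω.map cs.reflPerm).prod (t, e) =
      (cs.wordProd ω * t * (cs.wordProd ω)⁻¹,
        e + (cs.leftInvSeq ω).count (cs.wordProd ω * t * (cs.wordProd ω)⁻¹)) := by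
  induction ω with
  | nil => simp
  | cons i ω ih =>
    rw [List.map_cons, List.prod_cons, Equiv.Perm.mul_apply, ih, reflPerm_apply, leftInvSeq,
      List.count_cons]
    set x := cs.wordProd ω * t * (cs.wordProd ω)⁻¹
    have hx : cs.wordProd (i :: ω) * t * (cs.wordProd (i :: ω))⁻¹ =
        MulAut.conj (cs.simple i) x := by
      simp [x, wordProd_cons, mul_assoc]
    rw [hx, List.count_map_of_injective _ _ (MulEquiv.injective _)]
    simp [add_assoc, mul_eq_one_iff_inv_eq, eq_comm (a := x)]

theorem isLiftable_reflPerm : M.IsLiftable cs.reflPerm := by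
  intro i j
  ext ⟨t, e⟩ : 1
  have hprod : cs.wordProd (alternatingWord i j (2 * M i j)) = 1 := by
    simp [prod_alternatingWord_eq_mul_pow, simple_mul_simple_pow]
  -- the left inversion sequence of the braid word has period `M i j`, so it lists every
  -- reflection an even number of times
  have hperiod : ∀ k, cs.simple i * (cs.simple j * cs.simple i) ^ (M i j + k) =
      cs.simple i * (cs.simple j * cs.simple i) ^ k := by
    simp [pow_add, simple_mul_simple_pow']
  rw [← prod_map_alternatingWord_two_mul, prod_map_reflPerm_apply, hprod,
    leftInvSeq_alternatingWord_two_mul, two_mul, List.range_add, List.map_append, List.map_map]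
  simp [Function.comp_def, hperiod, ← two_mul]
  exact .inl rfl

noncomputable def reflRep : W →* Equiv.Perm (W × ZMod 2) :=
  cs.lift ⟨cs.reflPerm, cs.isLiftable_reflPerm⟩

theorem reflRep_wordProd (ω : List B) :
    cs.reflRep (cs.wordProd ω) = (ω.map cs.reflPerm).prod := by
  simp [reflRep, wordProd, map_list_prod, Function.comp_def]

noncomputable def invParity (w t : W) : ZMod 2 := (cs.reflRep w (t, 0)).2

theorem invParity_wordProd (ω : List B) (t : W) :
    cs.invParity (cs.wordProd ω) t =
      (cs.leftInvSeq ω).count (cs.wordProd ω * t * (cs.wordProd ω)⁻¹) := by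
  simp [invParity, reflRep_wordProd, prod_map_reflPerm_apply]

theorem reflRep_apply (w t : W) (e : ZMod 2) :
    cs.reflRep w (t, e) = (w * t * w⁻¹, e + cs.invParity w t) := by
  obtain ⟨ω, rfl⟩ := cs.wordProd_surjective w
  rw [invParity_wordProd, reflRep_wordProd, prod_map_reflPerm_apply]

theorem invParity_mul (x y t : W) :
    cs.invParity (x * y) t = cs.invParity y t + cs.invParity x (y * t * y⁻¹) := by
  rw [invParity, map_mul, Equiv.Perm.mul_apply, reflRep_apply, reflRep_apply, zero_add]

@[simp]
theorem invParity_one (t : W) : cs.invParity 1 t = 0 := by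
  simp [invParity]

theorem invParity_simple_self (i : B) : cs.invParity (cs.simple i) (cs.simple i) = 1 := by
  simp [invParity, reflRep, reflPerm_apply]

theorem IsReflection.invParity_self {t : W} (ht : cs.IsReflection t) :
    cs.invParity t t = 1 := by
  obtain ⟨y, i, rfl⟩ := ht
  have h1 := cs.invParity_mul (y * cs.simple i) y⁻¹ (y * cs.simple i * y⁻¹)
  have h2 := cs.invParity_mul y (cs.simple i) (cs.simple i)
  have h3 := cs.invParity_mul y y⁻¹ (y * cs.simple i * y⁻¹)
  have hconj : y⁻¹ * (y * cs.simple i * y⁻¹) * y = cs.simple i := by group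
  simp only [hconj, mul_inv_cancel_right, mul_inv_cancel, invParity_one, invParity_simple_self,
    inv_inv] at h1 h2 h3
  linear_combination h1 + h2 - h3

theorem isRightInversion_of_invParity_eq_one {w t : W} (h : cs.invParity w t = 1) :
    cs.IsRightInversion w t := by
  obtain ⟨ω, hω, rfl⟩ := cs.exists_isReduced w
  rw [invParity_wordProd] at h
  set x := cs.wordProd ω * t * (cs.wordProd ω)⁻¹
  have hx : x ∈ cs.leftInvSeq ω := List.count_pos_iff.mp <| Nat.pos_of_ne_zero fun h0 ↦ by
    simp [h0] at h
  obtain ⟨hrefl, hlt⟩ := cs.isLeftInversion_of_mem_leftInvSeq hω hx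
  refine ⟨(cs.isReflection_conj_iff _ t).mp hrefl, ?_⟩
  simpa [x] using hlt

theorem isRightInversion_iff_invParity_eq_one {w t : W} :
    cs.IsRightInversion w t ↔ cs.invParity w t = 1 := by
  refine ⟨fun ht ↦ ?_, cs.isRightInversion_of_invParity_eq_one⟩
  by_contra hne
  have hwt : cs.invParity (w * t) t = 1 := by
    rw [invParity_mul, ht.1.invParity_self, ht.1.mul_self, one_mul, ht.1.inv,
      ZMod.eq_zero_of_ne_one_two hne, add_zero]
  exact ht.1.isRightInversion_mul_left_iff.mp (cs.isRightInversion_of_invParity_eq_one hwt) ht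

end ReflectionCocycle

theorem isRightInversion_conj_of_isRightInversion_mul {x v t : W}
    (hxv : cs.IsRightInversion (x * v) t) (hv : ¬cs.IsRightInversion v t) :
    cs.IsRightInversion x (v * t * v⁻¹) := by
  classical
  rw [isRightInversion_iff_invParity_eq_one] at hxv hv ⊢
  rwa [invParity_mul, ZMod.eq_zero_of_ne_one_two hv, zero_add] at hxv

theorem isRightInversion_mul_of_length_mul {x v t : W}
    (hxv : cs.length (x * v) = cs.length x + cs.length v) (ht : cs.IsRightInversion v t) :
    cs.IsRightInversion (x * v) t := by
  refine ⟨ht.1, ?_⟩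
  calc cs.length (x * v * t) ≤ cs.length x + cs.length (v * t) := by
        rw [mul_assoc]; exact cs.length_mul_le _ _
    _ < cs.length (x * v) := by rw [hxv]; exact Nat.add_lt_add_left ht.2 _

theorem exists_heckeStep_eq_mul {x v : W} {i : B}
    (hxv : cs.length (x * v) = cs.length x + cs.length v)
    (hv : cs.length v < cs.length (v * cs.simple i)) :
    ∃ y, cs.heckeStep (x * v) i = y * (v * cs.simple i) ∧
      cs.length (y * (v * cs.simple i)) = cs.length y + cs.length (v * cs.simple i) := by
  have hvs : cs.length (v * cs.simple i) = cs.length v + 1 := by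
    have := cs.length_mul_simple v i
    omega
  by_cases hstep : cs.length (x * v) < cs.length (x * v * cs.simple i)
  · refine ⟨x, by rw [heckeStep, if_pos hstep, mul_assoc], ?_⟩
    have := cs.length_mul_simple (x * v) i
    rw [← mul_assoc]
    omega
  · set t := v * cs.simple i * v⁻¹
    have hx : cs.IsRightInversion x t := by
      refine cs.isRightInversion_conj_of_isRightInversion_mul ?_ fun h ↦ lt_asymm h.2 hv
      have := cs.length_mul_simple_ne (x * v) i
      exact ⟨cs.isReflection_simple i, by omega⟩
    have hprod : x * t * (v * cs.simple i) = x * v := by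
      simp [t, mul_assoc]
    refine ⟨x * t, by rw [heckeStep, if_neg hstep, hprod], ?_⟩
    have hle := cs.length_mul_le (x * t) (v * cs.simple i)
    rw [hprod] at hle ⊢
    have := hx.2
    omega

theorem heckeWord_append_singleton (u : W) (l : List B) (i : B) :
    cs.heckeWord u (l ++ [i]) = cs.heckeStep (cs.heckeWord u l) i := by
  simp [heckeWord]

theorem exists_heckeWord_eq_mul (u : W) {l : List B} (hl : cs.IsReduced l) :
    ∃ x, cs.heckeWord u l = x * cs.wordProd l ∧
      cs.length (x * cs.wordProd l) = cs.length x + cs.length (cs.wordProd l) := by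
  induction l using List.reverseRecOn with
  | nil => exact ⟨u, by simp [heckeWord]⟩
  | append_singleton l i ih =>
    obtain ⟨x, hx, hlen⟩ := ih (by simpa using hl.take l.length)
    have hli : cs.length (cs.wordProd l) < cs.length (cs.wordProd l * cs.simple i) := by
      have hred := hl.eq
      rw [wordProd_append, wordProd_singleton, List.length_append] at hred
      have := cs.length_wordProd_le l
      simp only [List.length_singleton] at hred
      omega
    simpa [heckeWord_append_singleton, hx, wordProd_append] using
      cs.exists_heckeStep_eq_mul hlen hli

theorem exists_heckeMul_eq_mul (u v : W) :
    ∃ x, cs.heckeMul u v = x * v ∧ cs.length (x * v) = cs.length x + cs.length v := by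
  obtain ⟨hl, hv⟩ := (cs.exists_reduced_word' v).choose_spec
  obtain ⟨x, hx, hlen⟩ := cs.exists_heckeWord_eq_mul u hl
  refine ⟨x, ?_, by rwa [← hv] at hlen⟩
  rw [heckeMul, hx, ← hv]

end CoxeterSystem

/-- `I(v) ⊆ I(u · v)` for the Hecke product. -/
theorem invSet_subset_heckeMul
    {B W : Type*} [Group W] {M : CoxeterMatrix B} (cs : CoxeterSystem M W)
    (u v : W) :
    cs.invSet v ⊆ cs.invSet (cs.heckeMul u v) := by
  obtain ⟨x, hx, hlen⟩ := cs.exists_heckeMul_eq_mul u v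
  intro t ht
  show cs.IsRightInversion _ t
  rw [hx]
  exact cs.isRightInversion_mul_of_length_mul hlen ht
end

section
/- Let γ ∈ Δ \ Δ_P and let w_P be the longest element of the parabolic subgroup W_P. Then w_P(γ) is the largest root in the set R ∩ (γ + ℤΔ_P), with respect to the partial order on the root lattice given by nonnegative combinations of simple roots. -/
open scoped RealInnerProductSpace

noncomputable section

variable {V : Type*} [NormedAddCommGroup V] [InnerProductSpace ℝ V]

/-- The reflection in a vector `α`: `γ ↦ γ − (2⟪α,γ⟫/⟪α,α⟫)·α` (identity if `α = 0`). -/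
def reflE (α : V) : V ≃ₗ[ℝ] V :=
  if h : ⟪α, α⟫ = (0 : ℝ) then LinearEquiv.refl ℝ V
  else
    Module.reflection (f := (2 / ⟪α, α⟫) • ((innerSL ℝ α).toLinearMap)) (x := α)
      (by
        simp only [LinearMap.smul_apply, ContinuousLinearMap.coe_coe, innerSL_apply_apply,
          smul_eq_mul]
        field_simp)

/-- Data of a (crystallographic) root system, realized in a real inner product space,
together with a choice of simple roots. -/
structure RootSystemData (V : Type*) [NormedAddCommGroup V] [InnerProductSpace ℝ V] where
  /-- the set of roots -/
  R : Finset V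
  /-- the simple roots -/
  Δ : Finset V
  ne_zero : ∀ α ∈ R, α ≠ 0
  simple_mem : ∀ β ∈ Δ, β ∈ R
  indep : LinearIndependent ℝ (fun β : Δ => (β : V))
  crystal : ∀ α ∈ R, ∀ γ ∈ R, ∃ n : ℤ, 2 * ⟪γ, α⟫ / ⟪α, α⟫ = (n : ℝ)
  refl_mem : ∀ α ∈ R, ∀ γ ∈ R, reflE α γ ∈ R
  pos_or_neg : ∀ α ∈ R,
    (∃ c : V → ℝ, (∀ v, 0 ≤ c v) ∧ α = ∑ β ∈ Δ, c β • β) ∨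
    (∃ c : V → ℝ, (∀ v, 0 ≤ c v) ∧ -α = ∑ β ∈ Δ, c β • β)

/-- the coroot `α∨ = 2α/(α,α)` -/
def coroot (α : V) : V := (2 / ⟪α, α⟫) • α

namespace RootSystemData

variable (rs : RootSystemData V)

/-- positive roots -/
def IsPos (α : V) : Prop :=
  α ∈ rs.R ∧ ∃ c : V → ℝ, (∀ v, 0 ≤ c v) ∧ α = ∑ β ∈ rs.Δ, c β • β

/-- the partial order on the root lattice: `y − x` is a nonnegative combination of
the simple roots -/
def rootLE (x y : V) : Prop :=
  ∃ c : V → ℝ, (∀ v, 0 ≤ c v) ∧ y - x = ∑ β ∈ rs.Δ, c β • β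

/-- the partial order on degrees: `y − x` is a nonnegative combination of the
simple coroots -/
def corootLE (x y : V) : Prop :=
  ∃ c : V → ℝ, (∀ v, 0 ≤ c v) ∧ y - x = ∑ β ∈ rs.Δ, c β • coroot β

/-- an effective degree -/
def Effective (d : V) : Prop := rs.corootLE 0 d

/-- `α` is a maximal root of the degree `d`, i.e. a maximal element of
`{γ ∈ R⁺ : γ∨ ≤ d}` -/
def IsMaxRoot (d α : V) : Prop :=
  rs.IsPos α ∧ rs.corootLE (coroot α) d ∧
    ∀ γ, rs.IsPos γ → rs.corootLE (coroot γ) d → rs.rootLE α γ → γ = α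

/-- a cosmall root: a maximal root of its own coroot degree -/
def IsCosmall (α : V) : Prop := rs.IsMaxRoot (coroot α) α

/-- the length of a Weyl group element: the number of positive roots sent to
negative roots -/
def len (w : V ≃ₗ[ℝ] V) : ℕ := Set.ncard {γ | rs.IsPos γ ∧ ¬ rs.IsPos (w γ)}

/-- the Bruhat order on the Weyl group -/
def bruhatLE (x y : V ≃ₗ[ℝ] V) : Prop :=
  Relation.ReflTransGen
    (fun a b => ∃ α ∈ rs.R, b = a * reflE α ∧ rs.len a < rs.len b) x y

/-- the support of a root: the simple roots below it -/
def supp (α : V) : Set V := {β | β ∈ rs.Δ ∧ rs.rootLE β α}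

/-- two roots are separated if every simple root in the support of one is
perpendicular to every simple root in the support of the other -/
def Separated (α β : V) : Prop :=
  ∀ x ∈ rs.supp α, ∀ y ∈ rs.supp β, ⟪x, y⟫ = (0 : ℝ)

end RootSystemData

/-- greedy decompositions of an effective degree -/
inductive RootSystemData.Greedy (rs : RootSystemData V) : V → List V → Prop
  | nil : rs.Greedy 0 []
  | cons {d α l} : rs.IsMaxRoot d α → rs.Greedy (d - coroot α) l →
      rs.Greedy d (α :: l)

/-- The Hecke product on the Weyl group, given axiomatically: it is associative,
unital, and is given on simple reflections by the usual Demazure recipe. -/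
structure HeckeData (rs : RootSystemData V) where
  hmul : (V ≃ₗ[ℝ] V) → (V ≃ₗ[ℝ] V) → (V ≃ₗ[ℝ] V)
  hmul_assoc : ∀ u v w, hmul (hmul u v) w = hmul u (hmul v w)
  one_hmul : ∀ u, hmul 1 u = u
  hmul_one : ∀ u, hmul u 1 = u
  hmul_simple : ∀ u (β : V), β ∈ rs.Δ →
    hmul u (reflE β) =
      if rs.len u < rs.len (u * reflE β) then u * reflE β else u

/-- the Hecke product `s_{α₁} · s_{α₂} · … · s_{α_k}` of the reflections in a list
of roots -/
def HeckeData.zOf {rs : RootSystemData V} (H : HeckeData rs) (l : List V) :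
    (V ≃ₗ[ℝ] V) :=
  l.foldl (fun w α => H.hmul w (reflE α)) 1

end

/-!
Each reflection `s_δ`, `δ ∈ Δ_P`, moves a root by an integer multiple of `δ`, so `W_P` preserves
`R ∩ (ρ + ℤΔ_P)` for every root `ρ`. Given a root `ρ ∈ γ + ℤΔ_P`, the root `σ = w_P⁻¹ ρ` lies in
`γ + ℤΔ_P` as well; its `γ`-coefficient is `1`, so `σ` is positive and `σ - γ = ∑ c_β β` with all
`c_β ≥ 0`. Hence `w_P γ - ρ = ∑ c_β (-w_P β)` is a nonnegative combination of the positive roots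
`-w_P β`.
-/

section

variable {V : Type*} [NormedAddCommGroup V] [InnerProductSpace ℝ V]

theorem reflE_apply {α : V} (hα : α ≠ 0) (y : V) :
    reflE α y = y - (2 * ⟪y, α⟫ / ⟪α, α⟫) • α := by
  rw [reflE, dif_neg (inner_self_ne_zero.mpr hα), Module.reflection_apply]
  simp only [LinearMap.smul_apply, ContinuousLinearMap.coe_coe, innerSL_apply_apply,
    smul_eq_mul, real_inner_comm α y]
  ring_nf

theorem reflE_inv (α : V) : (reflE α)⁻¹ = reflE α := by
  unfold reflE
  split_ifs <;> rfl

namespace RootSystemData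

variable (rs : RootSystemData V)

theorem exists_reflE_apply_eq_sub_zsmul {δ ρ : V} (hδ : δ ∈ rs.R) (hρ : ρ ∈ rs.R) :
    ∃ n : ℤ, reflE δ ρ = ρ - n • δ := by
  obtain ⟨n, hn⟩ := rs.crystal δ hδ ρ hρ
  refine ⟨n, ?_⟩
  rw [reflE_apply (rs.ne_zero δ hδ), hn, Int.cast_smul_eq_zsmul]

theorem apply_mem_R_and_sub_mem_closure {S : Set V} (hS : S ⊆ rs.R) {w : V ≃ₗ[ℝ] V}
    (hw : w ∈ Subgroup.closure {w : V ≃ₗ[ℝ] V | ∃ δ ∈ S, w = reflE δ}) {ρ : V}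
    (hρ : ρ ∈ rs.R) : w ρ ∈ rs.R ∧ w ρ - ρ ∈ AddSubgroup.closure S := by
  have reflE_case : ∀ δ ∈ S, ∀ ρ ∈ rs.R,
      reflE δ ρ ∈ rs.R ∧ reflE δ ρ - ρ ∈ AddSubgroup.closure S := by
    intro δ hδ ρ hρ
    obtain ⟨n, hn⟩ := rs.exists_reflE_apply_eq_sub_zsmul (hS hδ) hρ
    refine ⟨rs.refl_mem δ (hS hδ) ρ hρ, ?_⟩
    rw [hn, sub_sub_cancel_left, ← neg_zsmul]
    exact zsmul_mem (AddSubgroup.subset_closure hδ) _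
  induction hw using Subgroup.closure_induction'' generalizing ρ with
  | mem w hw =>
    obtain ⟨δ, hδ, rfl⟩ := hw
    exact reflE_case δ hδ ρ hρ
  | inv_mem w hw =>
    obtain ⟨δ, hδ, rfl⟩ := hw
    rw [reflE_inv]
    exact reflE_case δ hδ ρ hρ
  | one => simpa using hρ
  | mul u v _ _ hu hv =>
    obtain ⟨hvR, hvsub⟩ := hv hρ
    obtain ⟨huR, husub⟩ := hu hvR
    refine ⟨huR, ?_⟩
    rw [LinearEquiv.mul_apply, ← sub_add_sub_cancel]
    exact add_mem husub hvsub

theorem coeff_eq_of_sum_smul_eq {e d : V → ℝ}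
    (h : ∑ β ∈ rs.Δ, e β • β = ∑ β ∈ rs.Δ, d β • β) : ∀ β ∈ rs.Δ, e β = d β :=
  (linearIndepOn_finset_iffₛ (v := id) (s := rs.Δ)).mp rs.indep e d h

theorem coeff_nonneg_of_mem_R {σ : V} (hσ : σ ∈ rs.R) {e : V → ℝ}
    (he : σ = ∑ β ∈ rs.Δ, e β • β) {γ : V} (hγ : γ ∈ rs.Δ) (hpos : 0 < e γ) :
    ∀ β ∈ rs.Δ, 0 ≤ e β := by
  rcases rs.pos_or_neg σ hσ with ⟨d, hd, hσd⟩ | ⟨d, hd, hσd⟩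
  · intro β hβ
    rw [rs.coeff_eq_of_sum_smul_eq (he.symm.trans hσd) β hβ]
    exact hd β
  · have hneg : ∑ β ∈ rs.Δ, (-e β) • β = ∑ β ∈ rs.Δ, d β • β := by
      simp only [neg_smul, Finset.sum_neg_distrib, ← he, hσd]
    have hγ_coeff := rs.coeff_eq_of_sum_smul_eq hneg γ hγ
    linarith [hd γ]

theorem exists_nonneg_coeff_of_sub_mem_span {ΔP : Finset V} (hΔP : ΔP ⊆ rs.Δ) {γ σ : V}
    (hγ : γ ∈ rs.Δ) (hγP : γ ∉ ΔP) (hσ : σ ∈ rs.R)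
    (h : σ - γ ∈ Submodule.span ℝ (ΔP : Set V)) :
    ∃ c : V → ℝ, (∀ β ∈ ΔP, 0 ≤ c β) ∧ σ - γ = ∑ β ∈ ΔP, c β • β := by
  classical
  obtain ⟨c, hc_supp, hc⟩ := Submodule.mem_span_finset.mp h
  have hc_zero : ∀ β ∉ ΔP, c β = 0 := fun β hβ =>
    Function.notMem_support.mp fun h => hβ (hc_supp h)
  set e : V → ℝ := fun β => c β + if β = γ then 1 else 0
  have he : σ = ∑ β ∈ rs.Δ, e β • β := by
    simp only [e, add_smul, ite_smul, one_smul, zero_smul, Finset.sum_add_distrib,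
      Finset.sum_ite_eq', if_pos hγ]
    rw [← Finset.sum_subset hΔP fun β _ hβ => by rw [hc_zero β hβ, zero_smul], hc,
      sub_add_cancel]
  have he_nonneg := rs.coeff_nonneg_of_mem_R hσ he hγ (by simp [e, hc_zero γ hγP])
  refine ⟨c, fun β hβ => ?_, hc.symm⟩
  simpa [e, ne_of_mem_of_not_mem hβ hγP] using he_nonneg β (hΔP hβ)

theorem rootLE_zero_sub_iff {x y : V} : rs.rootLE 0 (y - x) ↔ rs.rootLE x y := by
  simp only [rootLE, sub_zero]

theorem rootLE_zero_add {u v : V} (hu : rs.rootLE 0 u) (hv : rs.rootLE 0 v) :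
    rs.rootLE 0 (u + v) := by
  obtain ⟨c, hc, hcu⟩ := hu
  obtain ⟨d, hd, hdv⟩ := hv
  refine ⟨c + d, fun β => add_nonneg (hc β) (hd β), ?_⟩
  simp only [sub_zero] at hcu hdv ⊢
  simp only [Pi.add_apply, add_smul, Finset.sum_add_distrib, hcu, hdv]

theorem rootLE_zero_smul {a : ℝ} (ha : 0 ≤ a) {v : V} (hv : rs.rootLE 0 v) :
    rs.rootLE 0 (a • v) := by
  obtain ⟨c, hc, hcv⟩ := hv
  refine ⟨a • c, fun β => mul_nonneg ha (hc β), ?_⟩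
  simp only [sub_zero] at hcv ⊢
  simp only [Pi.smul_apply, smul_eq_mul, mul_smul, hcv, Finset.smul_sum]

theorem rootLE_zero_sum_smul {ι : Type*} {s : Finset ι} {a : ι → ℝ} {v : ι → V}
    (ha : ∀ i ∈ s, 0 ≤ a i) (hv : ∀ i ∈ s, rs.rootLE 0 (v i)) :
    rs.rootLE 0 (∑ i ∈ s, a i • v i) :=
  Finset.sum_induction _ (rs.rootLE 0) (fun _ _ => rs.rootLE_zero_add)
    ⟨0, fun _ => le_rfl, by simp⟩ fun i hi => rs.rootLE_zero_smul (ha i hi) (hv i hi)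

theorem rootLE_zero_neg_of_not_isPos {α : V} (hα : α ∈ rs.R) (h : ¬ rs.IsPos α) :
    rs.rootLE 0 (-α) := by
  simpa only [rootLE, sub_zero] using (rs.pos_or_neg α hα).resolve_left fun hpos => h ⟨hα, hpos⟩

end RootSystemData

end

/-- For `γ ∈ Δ \\ Δ_P` and `w_P` the longest element of `W_P` (characterized as an
element of `W_P` sending every simple root of `Δ_P` to a negative root), `w_P(γ)` is
the largest root in `R ∩ (γ + ℤΔ_P)`. -/
theorem wP_apply_is_largest_root
    {V : Type*} [NormedAddCommGroup V] [InnerProductSpace ℝ V]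
    (rs : RootSystemData V) (ΔP : Finset V) (hΔP : ΔP ⊆ rs.Δ)
    (γ : V) (hγ : γ ∈ rs.Δ) (hγP : γ ∉ ΔP)
    (wP : V ≃ₗ[ℝ] V)
    (hwP : wP ∈ Subgroup.closure {w : V ≃ₗ[ℝ] V | ∃ δ ∈ ΔP, w = reflE δ})
    (hlong : ∀ δ ∈ ΔP, wP δ ∈ rs.R ∧ ¬ rs.IsPos (wP δ)) :
    (wP γ ∈ rs.R ∧ wP γ - γ ∈ AddSubgroup.closure (ΔP : Set V)) ∧
    (∀ ρ ∈ rs.R, ρ - γ ∈ AddSubgroup.closure (ΔP : Set V) → rs.rootLE ρ (wP γ)) := by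
  have hΔP_R : (ΔP : Set V) ⊆ rs.R := fun δ hδ => rs.simple_mem δ (hΔP hδ)
  refine ⟨rs.apply_mem_R_and_sub_mem_closure hΔP_R hwP (rs.simple_mem γ hγ),
    fun ρ hρ hργ => ?_⟩
  obtain ⟨hσR, hσρ⟩ := rs.apply_mem_R_and_sub_mem_closure hΔP_R (inv_mem hwP) hρ
  have hσγ : wP⁻¹ ρ - γ ∈ Submodule.span ℝ (ΔP : Set V) :=
    (AddSubgroup.closure_le (Submodule.span ℝ (ΔP : Set V)).toAddSubgroup).mpr
      Submodule.subset_span (sub_add_sub_cancel (wP⁻¹ ρ) ρ γ ▸ add_mem hσρ hργ)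
  obtain ⟨c, hc, hσc⟩ := rs.exists_nonneg_coeff_of_sub_mem_span hΔP hγ hγP hσR hσγ
  have hρ : ρ = wP (wP⁻¹ ρ) := (wP.apply_symm_apply ρ).symm
  have hdiff : wP γ - ρ = ∑ β ∈ ΔP, c β • -wP β := by
    rw [hρ, ← map_sub, ← neg_sub, hσc]
    simp only [map_neg, map_sum, map_smul, smul_neg, Finset.sum_neg_distrib]
  rw [← rs.rootLE_zero_sub_iff, hdiff]
  exact rs.rootLE_zero_sum_smul hc fun β hβ =>
    rs.rootLE_zero_neg_of_not_isPos (hlong β hβ).1 (hlong β hβ).2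
end
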